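/- arXiv:math/0202089 — 2 statements merged into one kernel-verified Lean document; each statement's English description precedes it below -/
import Mathlib

section
/- Fix a prime p and α > 0. The set G_p = [0,1) × ℤ_p with the addition (ξ,x) + (η,y) = (ξ+η−⌊ξ+η⌋, x+y+⌊ξ+η⌋) is an abelian group, ρ_α(f,g) = min(ℓ_α(f−g), ℓ_α(g−f)) with ℓ_α(ξ,x) = max(ξ, |x|_p^α) is a translation-invariant metric on G_p, and (G_p, ρ_α) is algebraically and isometrically isomorphic to the p-adic solenoid T_p = (ℝ × ℤ_p)/B equipped with the quotient metric ρ_α(f,g) = inf{ ρ̂_α(u,v) : u ∈ f, v ∈ g } induced by ρ̂_α((a,x),(b,y)) = max(|a−b|, |x−y|_p^α). -/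
open scoped ENNReal

noncomputable section

/-- The concrete model `G_p = [0,1) × ℤ_p` of the `p`-adic solenoid. -/
def GP (p : ℕ) [Fact p.Prime] : Type := Set.Ico (0 : ℝ) 1 × ℤ_[p]

variable {p : ℕ} [Fact p.Prime]

/-- Addition on `G_p`: `(ξ,x) + (η,y) = (ξ+η−⌊ξ+η⌋, x+y+⌊ξ+η⌋)`. -/
def gAdd (f g : GP p) : GP p :=
  (⟨Int.fract ((f.1 : ℝ) + (g.1 : ℝ)), Int.fract_nonneg _, Int.fract_lt_one _⟩,
    f.2 + g.2 + ((⌊(f.1 : ℝ) + (g.1 : ℝ)⌋ : ℤ) : ℤ_[p]))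

/-- The zero element of `G_p`. -/
def gZero : GP p := (⟨0, le_rfl, one_pos⟩, 0)

/-- Negation on `G_p`: `−(ξ,x) = (0,−x)` if `ξ = 0` and `(1−ξ, −x−1)` otherwise. -/
def gNeg (f : GP p) : GP p :=
  if h : (f.1 : ℝ) = 0 then (⟨0, le_rfl, one_pos⟩, -f.2)
  else
    (⟨1 - (f.1 : ℝ), by
        have h0 : (0 : ℝ) ≤ (f.1 : ℝ) := f.1.2.1
        have h1 : (f.1 : ℝ) < 1 := f.1.2.2
        have hpos : (0 : ℝ) < (f.1 : ℝ) := lt_of_le_of_ne h0 (Ne.symm h)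
        exact ⟨by linarith, by linarith⟩⟩,
      -f.2 - 1)

/-- `ℓ_α(ξ,x) = max(ξ, |x|_p^α)`. -/
def ell (α : ℝ) (f : GP p) : ℝ := max (f.1 : ℝ) (‖f.2‖ ^ α)

/-- The invariant metric `ρ_α(f,g) = min(ℓ_α(f−g), ℓ_α(g−f))` on `G_p`. -/
def rhoG (α : ℝ) (f g : GP p) : ℝ :=
  min (ell α (gAdd f (gNeg g))) (ell α (gAdd g (gNeg f)))

/-- A metric on `M`. -/
structure IsMetric {M : Type*} (ρ : M → M → ℝ) : Prop where
  nonneg : ∀ x y, 0 ≤ ρ x y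
  refl : ∀ x, ρ x x = 0
  symm : ∀ x y, ρ x y = ρ y x
  triangle : ∀ x y z, ρ x z ≤ ρ x y + ρ y z
  eq_of_eq_zero : ∀ x y, ρ x y = 0 → x = y

/-- The subgroup `B = {(n,−n) : n ∈ ℤ}` of `ℝ × ℤ_p`. -/
def BSub (p : ℕ) [Fact p.Prime] : AddSubgroup (ℝ × ℤ_[p]) :=
  AddSubgroup.zmultiples ((1 : ℝ), (-1 : ℤ_[p]))

/-- The `p`-adic solenoid `T_p = (ℝ × ℤ_p)/B`. -/
def TP (p : ℕ) [Fact p.Prime] : Type := (ℝ × ℤ_[p]) ⧸ BSub p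

instance : AddCommGroup (TP p) := QuotientAddGroup.Quotient.addCommGroup (BSub p)

/-- The invariant metric `ρ̂_α((a,x),(b,y)) = max(|a−b|, |x−y|_p^α)` on `ℝ × ℤ_p`. -/
def rhoHat (α : ℝ) (u v : ℝ × ℤ_[p]) : ℝ := max |u.1 - v.1| (‖u.2 - v.2‖ ^ α)

/-- The quotient metric `ρ_α(f,g) = inf{ρ̂_α(u,v) : u ∈ f, v ∈ g}` on `T_p`. -/
def rhoT (α : ℝ) (f g : TP p) : ℝ :=
  sInf {r : ℝ | ∃ u v : ℝ × ℤ_[p],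
    (QuotientAddGroup.mk u : TP p) = f ∧ (QuotientAddGroup.mk v : TP p) = g ∧ r = rhoHat α u v}


namespace SolenoidAux

variable {p : ℕ} [Fact p.Prime]

/-- The natural map from the concrete model to the solenoid. -/
def emap (f : GP p) : TP p := QuotientAddGroup.mk ((f.1 : ℝ), f.2)

lemma mem_BSub {u : ℝ × ℤ_[p]} : u ∈ BSub p ↔ ∃ n : ℤ, u = ((n : ℝ), (-n : ℤ_[p])) := by
  rw [BSub, AddSubgroup.mem_zmultiples_iff]
  constructor
  · rintro ⟨n, rfl⟩; exact ⟨n, by simp [Prod.ext_iff]⟩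
  · rintro ⟨n, rfl⟩; exact ⟨n, by simp [Prod.ext_iff]⟩

lemma emap_mk_eq_iff {u v : ℝ × ℤ_[p]} :
    (QuotientAddGroup.mk u : TP p) = QuotientAddGroup.mk v ↔
      ∃ n : ℤ, u.1 - v.1 = (n : ℝ) ∧ u.2 - v.2 = (-n : ℤ_[p]) := by
  rw [QuotientAddGroup.eq, mem_BSub]
  constructor
  · rintro ⟨n, h⟩
    rw [Prod.ext_iff] at h
    obtain ⟨h1, h2⟩ := h
    simp only [Prod.fst_add, Prod.fst_neg, Prod.snd_add, Prod.snd_neg] at h1 h2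
    exact ⟨-n, by push_cast; linarith, by push_cast; linear_combination -h2⟩
  · rintro ⟨n, h1, h2⟩
    refine ⟨-n, Prod.ext ?_ ?_⟩
    · simp only [Prod.fst_add, Prod.fst_neg]; push_cast; linarith
    · simp only [Prod.snd_add, Prod.snd_neg]; push_cast; linear_combination -h2

lemma mk_add_mk (u v : ℝ × ℤ_[p]) :
    (QuotientAddGroup.mk u : TP p) + QuotientAddGroup.mk v = QuotientAddGroup.mk (u + v) :=
  rfl

lemma mk_neg (u : ℝ × ℤ_[p]) :
    -(QuotientAddGroup.mk u : TP p) = QuotientAddGroup.mk (-u) :=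
  rfl

lemma emap_add (f g : GP p) : emap (gAdd f g) = emap f + emap g := by
  show (QuotientAddGroup.mk (((gAdd f g).1 : ℝ), (gAdd f g).2) : TP p) =
    QuotientAddGroup.mk (((f.1 : ℝ), f.2) + ((g.1 : ℝ), g.2))
  refine emap_mk_eq_iff.mpr ?_
  refine ⟨-⌊(f.1 : ℝ) + (g.1 : ℝ)⌋, ?_, ?_⟩
  · show Int.fract ((f.1 : ℝ) + (g.1 : ℝ)) - ((f.1 : ℝ) + (g.1 : ℝ)) = _
    rw [Int.fract]; push_cast; ring
  · show f.2 + g.2 + (⌊(f.1 : ℝ) + (g.1 : ℝ)⌋ : ℤ_[p]) - (f.2 + g.2) = _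
    push_cast; ring

lemma emap_zero : emap (gZero : GP p) = 0 := rfl

lemma emap_injective : Function.Injective (emap (p := p)) := by
  intro f g h
  replace h : ∃ n : ℤ, (f.1 : ℝ) - (g.1 : ℝ) = (n : ℝ) ∧ f.2 - g.2 = (-n : ℤ_[p]) :=
    emap_mk_eq_iff.mp h
  obtain ⟨n, h1, h2⟩ := h
  have hf0 : (0:ℝ) ≤ (f.1 : ℝ) := f.1.2.1
  have hf1 : (f.1 : ℝ) < 1 := f.1.2.2
  have hg0 : (0:ℝ) ≤ (g.1 : ℝ) := g.1.2.1
  have hg1 : (g.1 : ℝ) < 1 := g.1.2.2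
  have hn : n = 0 := by
    have : |(n : ℝ)| < 1 := by rw [← h1]; rw [abs_lt]; constructor <;> linarith
    exact Int.abs_lt_one_iff.mp (by exact_mod_cast this)
  subst hn
  have e1 : (f.1 : ℝ) = (g.1 : ℝ) := by push_cast at h1; linarith
  have e2 : f.2 = g.2 := by push_cast at h2; linear_combination h2
  exact Prod.ext (Subtype.ext e1) e2

lemma emap_neg (f : GP p) : emap (gNeg f) = - emap f := by
  show (QuotientAddGroup.mk (((gNeg f).1 : ℝ), (gNeg f).2) : TP p) =
    QuotientAddGroup.mk (-((f.1 : ℝ), f.2))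
  refine emap_mk_eq_iff.mpr ?_
  by_cases h : (f.1 : ℝ) = 0
  · refine ⟨0, ?_, ?_⟩
    · show ((gNeg f).1 : ℝ) - (-(f.1 : ℝ)) = _
      rw [show gNeg f = _ from dif_pos h]; simpa using h
    · show (gNeg f).2 - (-f.2) = _
      rw [show gNeg f = _ from dif_pos h]; simp
  · refine ⟨1, ?_, ?_⟩
    · show ((gNeg f).1 : ℝ) - (-(f.1 : ℝ)) = _
      rw [show gNeg f = _ from dif_neg h]; push_cast; ring
    · show (gNeg f).2 - (-f.2) = _
      rw [show gNeg f = _ from dif_neg h]; push_cast; ring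

lemma emap_surjective : Function.Surjective (emap (p := p)) := by
  intro t
  obtain ⟨u, rfl⟩ := QuotientAddGroup.mk_surjective t
  refine ⟨(⟨Int.fract u.1, Int.fract_nonneg _, Int.fract_lt_one _⟩, u.2 + (⌊u.1⌋ : ℤ_[p])), ?_⟩
  refine emap_mk_eq_iff.mpr ?_
  refine ⟨-⌊u.1⌋, ?_, ?_⟩
  · show Int.fract u.1 - u.1 = _
    rw [Int.fract]; push_cast; ring
  · show u.2 + (⌊u.1⌋ : ℤ_[p]) - u.2 = _
    push_cast; ring

lemma gAdd_comm (f g : GP p) : gAdd f g = gAdd g f := by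
  apply emap_injective; rw [emap_add, emap_add, add_comm]

lemma gAdd_assoc (f g h : GP p) : gAdd (gAdd f g) h = gAdd f (gAdd g h) := by
  apply emap_injective; rw [emap_add, emap_add, emap_add, emap_add, add_assoc]

lemma gAdd_zero (f : GP p) : gAdd f gZero = f := by
  apply emap_injective; rw [emap_add, emap_zero, add_zero]

lemma gAdd_neg (f : GP p) : gAdd f (gNeg f) = gZero := by
  apply emap_injective; rw [emap_add, emap_neg, add_neg_cancel, emap_zero]

lemma gNeg_swap (f g : GP p) : gAdd g (gNeg f) = gNeg (gAdd f (gNeg g)) := by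
  apply emap_injective
  rw [emap_neg, emap_add, emap_add, emap_neg, emap_neg]
  abel

variable {α : ℝ}

lemma rhoHat_nonneg (u v : ℝ × ℤ_[p]) : 0 ≤ rhoHat α u v :=
  le_trans (abs_nonneg _) (le_max_left _ _)

lemma rhoHat_symm (u v : ℝ × ℤ_[p]) : rhoHat α u v = rhoHat α v u := by
  unfold rhoHat; rw [abs_sub_comm, norm_sub_rev]

lemma rhoHat_translate (u v w : ℝ × ℤ_[p]) : rhoHat α (u + w) (v + w) = rhoHat α u v := by
  simp [rhoHat]

lemma rhoHat_triangle (hα : 0 < α) (u v w : ℝ × ℤ_[p]) :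
    rhoHat α u w ≤ rhoHat α u v + rhoHat α v w := by
  have hnon : ‖u.2 - w.2‖ ≤ max ‖u.2 - v.2‖ ‖v.2 - w.2‖ := by
    have := PadicInt.nonarchimedean (u.2 - v.2) (v.2 - w.2)
    rwa [sub_add_sub_cancel] at this
  have hr : ‖u.2 - w.2‖ ^ α ≤ max (‖u.2 - v.2‖ ^ α) (‖v.2 - w.2‖ ^ α) := by
    rcases le_total ‖u.2 - v.2‖ ‖v.2 - w.2‖ with hc | hc
    · exact le_max_of_le_right
        (Real.rpow_le_rpow (norm_nonneg _) (hnon.trans_eq (max_eq_right hc)) hα.le)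
    · exact le_max_of_le_left
        (Real.rpow_le_rpow (norm_nonneg _) (hnon.trans_eq (max_eq_left hc)) hα.le)
  refine max_le ?_ ?_
  · calc |u.1 - w.1| ≤ |u.1 - v.1| + |v.1 - w.1| := abs_sub_le _ _ _
      _ ≤ rhoHat α u v + rhoHat α v w := add_le_add (le_max_left _ _) (le_max_left _ _)
  · refine hr.trans (max_le ?_ ?_)
    · exact le_add_of_le_of_nonneg (le_max_right _ _) (rhoHat_nonneg _ _)
    · exact le_add_of_nonneg_of_le (rhoHat_nonneg _ _) (le_max_right _ _)

/-- The set over which the infimum in `rhoT` is taken. -/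
def TS (α : ℝ) (f g : TP p) : Set ℝ :=
  {r : ℝ | ∃ u v : ℝ × ℤ_[p],
    (QuotientAddGroup.mk u : TP p) = f ∧ (QuotientAddGroup.mk v : TP p) = g ∧ r = rhoHat α u v}

lemma rhoT_eq_sInf (f g : TP p) : rhoT α f g = sInf (TS α f g) := rfl

lemma TS_nonempty (f g : TP p) : (TS α f g).Nonempty := by
  obtain ⟨u, rfl⟩ := QuotientAddGroup.mk_surjective f
  obtain ⟨v, rfl⟩ := QuotientAddGroup.mk_surjective g
  exact ⟨rhoHat α u v, u, v, rfl, rfl, rfl⟩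

lemma TS_bddBelow (f g : TP p) : BddBelow (TS α f g) := by
  refine ⟨0, fun r hr => ?_⟩
  obtain ⟨u, v, -, -, rfl⟩ := hr
  exact rhoHat_nonneg u v

lemma rhoT_nonneg (f g : TP p) : 0 ≤ rhoT α f g :=
  le_csInf (TS_nonempty f g) (fun r hr => by
    obtain ⟨u, v, -, -, rfl⟩ := hr; exact rhoHat_nonneg u v)

lemma rhoT_symm (f g : TP p) : rhoT α f g = rhoT α g f := by
  rw [rhoT, rhoT]
  congr 1
  ext r
  constructor
  · rintro ⟨u, v, hu, hv, rfl⟩; exact ⟨v, u, hv, hu, rhoHat_symm u v⟩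
  · rintro ⟨u, v, hu, hv, rfl⟩; exact ⟨v, u, hv, hu, rhoHat_symm u v⟩

lemma rhoT_triangle (hα : 0 < α) (f g h : TP p) :
    rhoT α f h ≤ rhoT α f g + rhoT α g h := by
  have key : ∀ r1 ∈ TS α f g, ∀ r2 ∈ TS α g h, rhoT α f h ≤ r1 + r2 := by
    rintro r1 ⟨u, v, hu, hv, rfl⟩ r2 ⟨v', w, hv', hw, rfl⟩
    have hmk : (QuotientAddGroup.mk (w + (v - v')) : TP p) = h := by
      have : (QuotientAddGroup.mk (v - v') : TP p) = 0 := by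
        rw [sub_eq_add_neg, ← mk_add_mk, ← mk_neg, hv, hv']; exact add_neg_cancel g
      rw [← mk_add_mk, this, add_zero, hw]
    have hmem : rhoHat α u (w + (v - v')) ∈ TS α f h := ⟨u, w + (v - v'), hu, hmk, rfl⟩
    have hle : rhoHat α u (w + (v - v')) ≤ rhoHat α u v + rhoHat α v' w := by
      have ht := rhoHat_triangle (p := p) hα u v (w + (v - v'))
      have heq : rhoHat α v (w + (v - v')) = rhoHat α v' w := by
        have := rhoHat_translate (p := p) (α := α) v' w (v - v')
        rwa [add_sub_cancel] at this
      rw [heq] at ht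
      exact ht
    exact (csInf_le (TS_bddBelow f h) hmem).trans hle
  have h1 : ∀ r1 ∈ TS α f g, rhoT α f h - r1 ≤ rhoT α g h :=
    fun r1 hr1 => le_csInf (TS_nonempty g h) (fun r2 hr2 => by linarith [key r1 hr1 r2 hr2])
  have h2 : rhoT α f h - rhoT α g h ≤ rhoT α f g :=
    le_csInf (TS_nonempty f g) (fun r1 hr1 => by linarith [h1 r1 hr1])
  linarith

lemma norm_rpow_le_one (hα : 0 < α) (x : ℤ_[p]) : ‖x‖ ^ α ≤ 1 :=
  Real.rpow_le_one (norm_nonneg _) x.norm_le_one hα.le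

lemma ell_nonneg (f : GP p) : 0 ≤ ell α f := le_trans f.1.2.1 (le_max_left _ _)

lemma ell_le_one (hα : 0 < α) (f : GP p) : ell α f ≤ 1 :=
  max_le f.1.2.2.le (norm_rpow_le_one hα f.2)

/-- The key computation: the quotient metric agrees with `rhoG` through `emap`. -/
lemma rhoT_emap (hα : 0 < α) (f g : GP p) : rhoT α (emap f) (emap g) = rhoG α f g := by
  rw [show rhoG α f g = min (ell α (gAdd f (gNeg g))) (ell α (gAdd g (gNeg f))) from rfl]
  set h1 := gAdd f (gNeg g) with hh1
  set h2 := gAdd g (gNeg f) with hh2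
  have hmap1 : emap h1 = emap f - emap g := by
    rw [hh1, emap_add, emap_neg, sub_eq_add_neg]
  have hmap2 : emap h2 = emap g - emap f := by
    rw [hh2, emap_add, emap_neg, sub_eq_add_neg]
  have hm1 : ell α h1 ∈ TS α (emap f) (emap g) := by
    refine ⟨((h1.1 : ℝ), h1.2) + ((g.1 : ℝ), g.2), ((g.1 : ℝ), g.2), ?_, rfl, ?_⟩
    · rw [← mk_add_mk]
      show emap h1 + emap g = emap f
      rw [hmap1, sub_add_cancel]
    · rw [rhoHat]
      simp only [Prod.fst_add, Prod.snd_add]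
      rw [add_sub_cancel_right, add_sub_cancel_right, ell, abs_of_nonneg h1.1.2.1]
  have hm2 : ell α h2 ∈ TS α (emap f) (emap g) := by
    refine ⟨((f.1 : ℝ), f.2), ((h2.1 : ℝ), h2.2) + ((f.1 : ℝ), f.2), rfl, ?_, ?_⟩
    · rw [← mk_add_mk]
      show emap h2 + emap f = emap g
      rw [hmap2, sub_add_cancel]
    · rw [rhoHat]
      simp only [Prod.fst_add, Prod.snd_add]
      have e1 : (f.1 : ℝ) - ((h2.1 : ℝ) + (f.1 : ℝ)) = -(h2.1 : ℝ) := by ring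
      have e2 : f.2 - (h2.2 + f.2) = -h2.2 := by ring
      rw [e1, e2, abs_neg, norm_neg, ell, abs_of_nonneg h2.1.2.1]
  have hlb : ∀ r ∈ TS α (emap f) (emap g), min (ell α h1) (ell α h2) ≤ r := by
    rintro r ⟨u, v, hu, hv, rfl⟩
    have hmk : (QuotientAddGroup.mk (u - v) : TP p) = emap h1 := by
      rw [hmap1, ← hu, ← hv]; exact QuotientAddGroup.mk_sub (BSub p) u v
    replace hmk : ∃ n : ℤ, (u - v).1 - (h1.1 : ℝ) = (n : ℝ) ∧ (u - v).2 - h1.2 = (-n : ℤ_[p]) :=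
      emap_mk_eq_iff.mp hmk
    obtain ⟨n, e1, e2⟩ := hmk
    simp only [Prod.fst_sub, Prod.snd_sub] at e1 e2
    have hξ0 : (0:ℝ) ≤ (h1.1 : ℝ) := h1.1.2.1
    have hξ1 : (h1.1 : ℝ) < 1 := h1.1.2.2
    have hmin1 : min (ell α h1) (ell α h2) ≤ ell α h1 := min_le_left _ _
    have hmin2 : min (ell α h1) (ell α h2) ≤ ell α h2 := min_le_right _ _
    have hr : rhoHat α u v = max |u.1 - v.1| (‖u.2 - v.2‖ ^ α) := rfl
    rcases eq_or_ne n 0 with rfl | hn0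
    · have ha : u.1 - v.1 = (h1.1 : ℝ) := by push_cast at e1; linarith
      have hx : u.2 - v.2 = h1.2 := by push_cast at e2; linear_combination e2
      rw [hr, ha, hx, abs_of_nonneg hξ0]
      exact hmin1
    rcases eq_or_ne n (-1) with rfl | hn1
    · have ha : u.1 - v.1 = (h1.1 : ℝ) - 1 := by push_cast at e1; linarith
      have hx : u.2 - v.2 = h1.2 + 1 := by push_cast at e2; linear_combination e2
      by_cases hz : (h1.1 : ℝ) = 0
      · have hge : (1:ℝ) ≤ |u.1 - v.1| := by rw [ha, hz]; norm_num
        rw [hr]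
        exact hmin1.trans ((ell_le_one hα h1).trans (hge.trans (le_max_left _ _)))
      · have hneg : h2 = gNeg h1 := gNeg_swap f g
        have hell2 : ell α h2 = max (1 - (h1.1 : ℝ)) (‖h1.2 + 1‖ ^ α) := by
          rw [hneg, ell, show gNeg h1 = _ from dif_neg hz]
          rw [show -h1.2 - 1 = -(h1.2 + 1) by ring, norm_neg]
        rw [hr, ha, hx, abs_of_nonpos (by linarith), neg_sub]
        rw [← hell2] at *
        exact hmin2.trans_eq rfl
    · have hge : (1:ℝ) ≤ |u.1 - v.1| := by
        have he : u.1 - v.1 = (h1.1 : ℝ) + n := by linarith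
        rcases lt_or_ge n 0 with hn | hn
        · have hle2 : n ≤ -2 := by omega
          have hle2' : (n:ℝ) ≤ -2 := by exact_mod_cast hle2
          rw [he, abs_of_nonpos (by linarith)]; linarith
        · have hge1 : 1 ≤ n := by omega
          have hge1' : (1:ℝ) ≤ (n:ℝ) := by exact_mod_cast hge1
          rw [he, abs_of_nonneg (by linarith)]; linarith
      rw [hr]
      exact hmin1.trans ((ell_le_one hα h1).trans (hge.trans (le_max_left _ _)))
  apply le_antisymm
  · exact le_min (csInf_le (TS_bddBelow _ _) hm1) (csInf_le (TS_bddBelow _ _) hm2)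
  · exact le_csInf (TS_nonempty _ _) hlb

end SolenoidAux

/-- `G_p = [0,1) × ℤ_p` with the addition `(ξ,x)+(η,y) = (ξ+η−⌊ξ+η⌋, x+y+⌊ξ+η⌋)` is an
abelian group, `ρ_α` is a translation-invariant metric on it, and `(G_p, ρ_α)` is
algebraically and isometrically isomorphic to the solenoid `T_p = (ℝ × ℤ_p)/B` with the
quotient metric induced by `ρ̂_α`. -/
theorem solenoid_model (p : ℕ) [Fact p.Prime] (α : ℝ) (hα : 0 < α) :
    (∀ f g : GP p, gAdd f g = gAdd g f) ∧
      (∀ f g h : GP p, gAdd (gAdd f g) h = gAdd f (gAdd g h)) ∧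
      (∀ f : GP p, gAdd f gZero = f) ∧
      (∀ f : GP p, gAdd f (gNeg f) = gZero) ∧
      IsMetric (rhoG (p := p) α) ∧
      (∀ h f g : GP p, rhoG α (gAdd h f) (gAdd h g) = rhoG α f g) ∧
      ∃ e : GP p ≃ TP p,
        (∀ f g : GP p, e (gAdd f g) = e f + e g) ∧
        (∀ f g : GP p, rhoT α (e f) (e g) = rhoG α f g) := by
  open SolenoidAux in
  have hz : ∀ h : GP p, ell α h = 0 → h = gZero := by
    intro h hh
    rw [ell] at hh
    have c1 : (h.1 : ℝ) ≤ 0 := hh.le.trans' (le_max_left _ _)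
    have c2 : ‖h.2‖ ^ α ≤ 0 := hh.le.trans' (le_max_right _ _)
    have hx : ‖h.2‖ = 0 := by
      by_contra hne
      have hpos : 0 < ‖h.2‖ := lt_of_le_of_ne (norm_nonneg _) (Ne.symm hne)
      exact absurd c2 (not_le.mpr (Real.rpow_pos_of_pos hpos α))
    exact Prod.ext (Subtype.ext (le_antisymm c1 h.1.2.1)) (norm_eq_zero.mp hx)
  refine ⟨gAdd_comm, gAdd_assoc, gAdd_zero, gAdd_neg, ?_, ?_, ?_⟩
  · constructor
    · intro f g
      exact le_min (ell_nonneg _) (ell_nonneg _)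
    · intro f
      rw [rhoG, gAdd_neg, min_self]
      simp [ell, gZero, Real.zero_rpow hα.ne']
    · intro f g
      exact min_comm _ _
    · intro x y z
      rw [← rhoT_emap hα x z, ← rhoT_emap hα x y, ← rhoT_emap hα y z]
      exact rhoT_triangle hα _ _ _
    · intro f g h0
      rw [rhoG] at h0
      rcases min_eq_iff.mp h0 with ⟨hc, -⟩ | ⟨hc, -⟩
      · have h1 := hz _ hc
        have := congrArg emap h1
        rw [emap_add, emap_neg, emap_zero, add_neg_eq_zero] at this
        exact emap_injective this
      · have h1 := hz _ hc
        have := congrArg emap h1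
        rw [emap_add, emap_neg, emap_zero, add_neg_eq_zero] at this
        exact (emap_injective this).symm
  · intro h f g
    have key : ∀ a b : GP p, gAdd (gAdd h a) (gNeg (gAdd h b)) = gAdd a (gNeg b) := by
      intro a b
      apply emap_injective
      simp only [emap_add, emap_neg]
      abel
    rw [rhoG, rhoG, key f g, key g f]
  · refine ⟨Equiv.ofBijective emap ⟨emap_injective, emap_surjective⟩, fun f g => ?_,
      fun f g => ?_⟩
    · exact emap_add f g
    · exact rhoT_emap hα f g
end
end

section
/- For every prime p, every m ∈ ℕ ∪ {∞}, and every s ∈ ℂ with |s| < 1, one has Δ_s^{(m)} ≥ 2·(sin(π/p) − |s|/(1−|s|)); consequently Δ_s^{(m)} > 0 whenever |s| < s₀ = sin(π/p)/(1 + sin(π/p)). -/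
open scoped ENNReal MeasureTheory

noncomputable section

/-- The digit expansion of `p`-adic numbers: `digit x n` is the coefficient of `pⁿ`
in the canonical expansion `x = Σ_{n ≥ v(x)} (digit x n)·pⁿ` with digits in `{0,…,p−1}`. -/
structure PadicDigits (p : ℕ) [Fact p.Prime] : Type where
  digit : ℚ_[p] → ℤ → ℕ
  digit_lt : ∀ x n, digit x n < p
  digit_zero : ∀ n, digit 0 n = 0
  digit_eq_zero_of_lt : ∀ x : ℚ_[p], x ≠ 0 → ∀ n : ℤ, n < x.valuation → digit x n = 0
  digit_valuation_ne_zero : ∀ x : ℚ_[p], x ≠ 0 → digit x x.valuation ≠ 0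
  expansion : ∀ x : ℚ_[p], x = ∑' n : ℤ, (digit x n : ℚ_[p]) * (p : ℚ_[p]) ^ n

variable {p : ℕ} [Fact p.Prime]

/-- `χ_n^{(m)}(x) = exp((2πi/p) Σ_{k=0}^{m} x_{n−k} p^{−k})`, where `m ∈ ℕ ∪ {∞}`. -/
def chiFn (D : PadicDigits p) (m : ℕ∞) (x : ℚ_[p]) (n : ℤ) : ℂ :=
  Complex.exp (((2 * Real.pi / p *
      ∑' k : ℕ, if (k : ℕ∞) ≤ m then (D.digit x (n - k) : ℝ) / (p : ℝ) ^ k else 0 : ℝ) : ℂ)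
    * Complex.I)

/-- `Υ_s^{(m)}(x) = Σ_{n<0} sⁿ(χ_n^{(m)}(x) − 1) + Σ_{n≥0} sⁿ χ_n^{(m)}(x)`. -/
def Upsilon (D : PadicDigits p) (m : ℕ∞) (s : ℂ) (x : ℚ_[p]) : ℂ :=
  ∑' n : ℤ, s ^ n * (chiFn D m x n - if n < 0 then 1 else 0)

/-- `Δ_s^{(m)} = inf{ |Υ_s^{(m)}(x) − Υ_s^{(m)}(y)| : x, y ∈ ℚ_p, |x−y|_p = 1 }`. -/
def Delta (D : PadicDigits p) (m : ℕ∞) (s : ℂ) : ℝ :=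
  sInf {r : ℝ | ∃ x y : ℚ_[p], ‖x - y‖ = 1 ∧
    r = ‖Upsilon D m s x - Upsilon D m s y‖}

/-- The scaling dimension `D_s = −1/log_p |s|`. -/
def scalingDim (p : ℕ) (s : ℂ) : ℝ := -1 / Real.logb p (‖s‖)


section AuxLemmas

variable (D : PadicDigits p)

def dterm (D : PadicDigits p) (x : ℚ_[p]) (n : ℤ) : ℚ_[p] :=
  (D.digit x n : ℚ_[p]) * (p : ℚ_[p]) ^ n

lemma one_lt_p : (1 : ℝ) < p := by exact_mod_cast (Fact.out : p.Prime).one_lt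

lemma norm_dterm_le (x : ℚ_[p]) (n : ℤ) : ‖dterm D x n‖ ≤ (p : ℝ) ^ (-n) := by
  rw [dterm, norm_mul, Padic.norm_p_zpow]
  have h1 : ‖((D.digit x n : ℤ) : ℚ_[p])‖ ≤ 1 := Padic.norm_int_le_one _
  have h2 : (0:ℝ) < (p:ℝ) ^ (-n) := zpow_pos (by linarith [one_lt_p (p := p)]) _
  push_cast at h1
  nlinarith [norm_nonneg ((D.digit x n : ℚ_[p]))]

lemma supportBound (x : ℚ_[p]) : ∃ N : ℤ, N ≤ 0 ∧ ∀ n < N, D.digit x n = 0 := by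
  by_cases hx : x = 0
  · exact ⟨0, le_refl _, fun n _ => by rw [hx]; exact D.digit_zero n⟩
  · exact ⟨min x.valuation 0, min_le_right _ _,
      fun n hn => D.digit_eq_zero_of_lt x hx n (lt_of_lt_of_le hn (min_le_left _ _))⟩

lemma summable_dterm_shift (x : ℚ_[p]) (N : ℤ) :
    Summable (fun k : ℕ => dterm D x (N + k)) := by
  have hp1 := one_lt_p (p := p)
  apply Summable.of_norm
  have hg : Summable (fun k : ℕ => (p : ℝ) ^ (-N) * ((p:ℝ)⁻¹) ^ k) := by
    apply Summable.mul_left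
    exact summable_geometric_of_lt_one (by positivity) (by
      rw [inv_lt_one_iff₀]; right; exact hp1)
  refine Summable.of_nonneg_of_le (fun k => norm_nonneg _) (fun k => ?_) hg
  calc ‖dterm D x (N + k)‖ ≤ (p : ℝ) ^ (-(N + (k:ℤ))) := norm_dterm_le D x _
    _ = (p : ℝ) ^ (-N) * ((p:ℝ)⁻¹) ^ k := by
        rw [neg_add, zpow_add₀ (by linarith : (p:ℝ) ≠ 0), inv_pow, ← zpow_natCast (p:ℝ),
          ← zpow_neg]

lemma expansion_shift (x : ℚ_[p]) {N : ℤ} (hN : ∀ n < N, D.digit x n = 0) :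
    x = ∑' k : ℕ, dterm D x (N + k) := by
  have hinj : Function.Injective (fun k : ℕ => N + (k : ℤ)) := fun a b h => by
    simpa using h
  have hsupp : Function.support (dterm D x) ⊆ Set.range (fun k : ℕ => N + (k : ℤ)) := by
    intro n hn
    by_contra hr
    apply hn
    have : n < N := by
      by_contra hlt
      push_neg at hlt
      exact hr ⟨(n - N).toNat, by simp [Int.toNat_of_nonneg (by omega : (0:ℤ) ≤ n - N)]⟩
    rw [dterm, hN n this]
    simp
  exact (D.expansion x).trans (hinj.tsum_eq hsupp).symm

lemma tail_bound (x : ℚ_[p]) {N : ℤ} (hN : ∀ n < N, D.digit x n = 0) (K : ℕ) :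
    ‖x - ∑ j ∈ Finset.range K, dterm D x (N + j)‖ ≤ (p : ℝ) ^ (-(N + K)) := by
  have hsum := summable_dterm_shift D x N
  have hx := expansion_shift D x hN
  have hsplit := Summable.sum_add_tsum_nat_add (f := fun k : ℕ => dterm D x (N + k)) K hsum
  rw [← hx] at hsplit
  rw [sub_eq_of_eq_add' hsplit.symm]
  apply IsUltrametricDist.norm_tsum_le_of_forall_le_of_nonneg
  · positivity
  · intro k
    refine le_trans (norm_dterm_le D x _) ?_
    apply zpow_le_zpow_right₀ (le_of_lt (one_lt_p (p := p)))
    push_cast; omega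

lemma ultra_sub_le (a b : ℚ_[p]) : ‖a - b‖ ≤ max ‖a‖ ‖b‖ := by
  rw [sub_eq_add_neg]
  simpa using IsUltrametricDist.norm_add_le_max a (-b)

lemma digits_of_norm_sub_eq_one (x y : ℚ_[p]) (hxy : ‖x - y‖ = 1) :
    (∀ n : ℤ, n < 0 → D.digit x n = D.digit y n) ∧
      ¬ ((p:ℤ) ∣ ((D.digit x 0 : ℤ) - (D.digit y 0 : ℤ))) := by
  have hp1 := one_lt_p (p := p)
  obtain ⟨Nx, hNx0, hNx⟩ := supportBound D x
  obtain ⟨Ny, hNy0, hNy⟩ := supportBound D y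
  set N : ℤ := min Nx Ny with hNdef
  have hN0 : N ≤ 0 := le_trans (min_le_left _ _) hNx0
  have hNx' : ∀ n < N, D.digit x n = 0 := fun n hn => hNx n (lt_of_lt_of_le hn (min_le_left _ _))
  have hNy' : ∀ n < N, D.digit y n = 0 := fun n hn => hNy n (lt_of_lt_of_le hn (min_le_right _ _))
  have hdiff : ∀ K : ℕ, ‖(x - y) - ∑ j ∈ Finset.range K, (dterm D x (N + j) - dterm D y (N + j))‖
      ≤ (p : ℝ) ^ (-(N + (K:ℤ))) := by
    intro K
    have h1 := tail_bound D x hNx' K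
    have h2 := tail_bound D y hNy' K
    have heq : (x - y) - ∑ j ∈ Finset.range K, (dterm D x (N + j) - dterm D y (N + j))
        = (x - ∑ j ∈ Finset.range K, dterm D x (N + j))
          - (y - ∑ j ∈ Finset.range K, dterm D y (N + j)) := by
      rw [Finset.sum_sub_distrib]; ring
    rw [heq]
    exact le_trans (ultra_sub_le _ _) (max_le h1 h2)
  have key : ∀ K : ℕ, N + (K:ℤ) < 0 → D.digit x (N + K) = D.digit y (N + K) := by
    intro K
    induction K using Nat.strong_induction_on with
    | _ K IH =>
      intro hK
      have hcol : ∑ j ∈ Finset.range (K+1), (dterm D x (N + j) - dterm D y (N + j))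
          = ((D.digit x (N+K) : ℚ_[p]) - (D.digit y (N+K) : ℚ_[p])) * (p:ℚ_[p])^(N+(K:ℤ)) := by
        rw [Finset.sum_eq_single_of_mem K (Finset.self_mem_range_succ K)]
        · rw [dterm, dterm]; ring
        · intro j hj hne
          have hj' : j < K := by
            have := Finset.mem_range.mp hj; omega
          have hjz : N + (j:ℤ) < 0 := by
            have : (j:ℤ) < (K:ℤ) := by exact_mod_cast hj'
            omega
          rw [dterm, dterm, IH j hj' hjz]; ring
      have hb := hdiff (K+1)
      rw [hcol] at hb
      have hxylt : ‖x - y‖ ≤ (p:ℝ)^(-(N + (K:ℤ) + 1)) := by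
        rw [hxy]
        calc (1:ℝ) = (p:ℝ)^(0:ℤ) := by simp
        _ ≤ (p:ℝ)^(-(N + (K:ℤ) + 1)) := zpow_le_zpow_right₀ (le_of_lt hp1) (by omega)
      have hc : ‖((D.digit x (N+K) : ℚ_[p]) - (D.digit y (N+K) : ℚ_[p])) * (p:ℚ_[p])^(N+(K:ℤ))‖
          ≤ (p:ℝ)^(-(N + (K:ℤ) + 1)) := by
        have heq2 : ((D.digit x (N+K) : ℚ_[p]) - (D.digit y (N+K) : ℚ_[p])) * (p:ℚ_[p])^(N+(K:ℤ))
            = (x - y) - ((x - y) - ((D.digit x (N+K) : ℚ_[p]) - (D.digit y (N+K) : ℚ_[p])) * (p:ℚ_[p])^(N+(K:ℤ))) := by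
          ring
        rw [heq2]
        refine le_trans (ultra_sub_le _ _) (max_le hxylt ?_)
        refine le_trans hb ?_
        apply zpow_le_zpow_right₀ (le_of_lt hp1)
        push_cast; omega
      rw [norm_mul, Padic.norm_p_zpow] at hc
      have hpz : (0:ℝ) < (p:ℝ)^(-(N+(K:ℤ))) := zpow_pos (by linarith) _
      have hsplit : (p:ℝ)^(-(N + (K:ℤ) + 1)) = (p:ℝ)^(-(N+(K:ℤ))) * (p:ℝ)⁻¹ := by
        rw [← zpow_neg_one, ← zpow_add₀ (by linarith : (p:ℝ) ≠ 0)]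
        congr 1; ring
      rw [hsplit] at hc
      have hnorm : ‖((D.digit x (N+K) : ℚ_[p]) - (D.digit y (N+K) : ℚ_[p]))‖ ≤ (p:ℝ)⁻¹ := by
        nlinarith [norm_nonneg ((D.digit x (N+K) : ℚ_[p]) - (D.digit y (N+K) : ℚ_[p]))]
      have hlt1 : ‖(((D.digit x (N+K) : ℤ) - (D.digit y (N+K) : ℤ) : ℤ) : ℚ_[p])‖ < 1 := by
        push_cast
        exact lt_of_le_of_lt hnorm (by rw [inv_lt_one_iff₀]; right; exact hp1)
      have hdvd := Padic.norm_intCast_lt_one_iff.mp hlt1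
      have habs : |((D.digit x (N+K) : ℤ) - (D.digit y (N+K) : ℤ))| < (p:ℤ) := by
        have h1 := D.digit_lt x (N+K)
        have h2 := D.digit_lt y (N+K)
        rw [abs_lt]; omega
      have := Int.eq_zero_of_abs_lt_dvd hdvd habs
      omega
  constructor
  · intro n hn
    by_cases hnN : n < N
    · rw [hNx' n hnN, hNy' n hnN]
    · push_neg at hnN
      have hn' : n = N + ((n - N).toNat : ℤ) := by
        rw [Int.toNat_of_nonneg (by omega)]; ring
      rw [hn']
      exact key _ (by rw [← hn']; exact hn)
  · set K0 : ℕ := (0 - N).toNat with hK0def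
    have hNK0 : N + (K0:ℤ) = 0 := by
      rw [hK0def, Int.toNat_of_nonneg (by omega)]; ring
    have hcol : ∑ j ∈ Finset.range (K0+1), (dterm D x (N + j) - dterm D y (N + j))
        = ((D.digit x 0 : ℚ_[p]) - (D.digit y 0 : ℚ_[p])) := by
      rw [Finset.sum_eq_single_of_mem K0 (Finset.self_mem_range_succ K0)]
      · rw [dterm, dterm, hNK0]; simp
      · intro j hj hne
        have hj' : j < K0 := by
          have := Finset.mem_range.mp hj; omega
        have hjz : N + (j:ℤ) < 0 := by
          have : (j:ℤ) < (K0:ℤ) := by exact_mod_cast hj'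
          omega
        rw [dterm, dterm, key j hjz]; ring
    have hb := hdiff (K0+1)
    rw [hcol] at hb
    have hblt : ‖(x - y) - ((D.digit x 0 : ℚ_[p]) - (D.digit y 0 : ℚ_[p]))‖ < 1 := by
      refine lt_of_le_of_lt hb ?_
      calc (p:ℝ)^(-(N + ((K0:ℤ)+1))) = (p:ℝ)^(-1:ℤ) := by
            congr 1; omega
      _ < (p:ℝ)^(0:ℤ) := zpow_lt_zpow_right₀ hp1 (by omega)
      _ = 1 := by simp
    intro hdvd
    have hlt1 : ‖(((D.digit x 0 : ℤ) - (D.digit y 0 : ℤ) : ℤ) : ℚ_[p])‖ < 1 :=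
      Padic.norm_intCast_lt_one_iff.mpr hdvd
    push_cast at hlt1
    have : ‖x - y‖ < 1 := by
      have heq3 : x - y = ((x - y) - ((D.digit x 0 : ℚ_[p]) - (D.digit y 0 : ℚ_[p])))
          + ((D.digit x 0 : ℚ_[p]) - (D.digit y 0 : ℚ_[p])) := by ring
      rw [heq3]
      exact lt_of_le_of_lt (IsUltrametricDist.norm_add_le_max _ _) (max_lt hblt hlt1)
    rw [hxy] at this
    exact lt_irrefl _ this

lemma abs_exp_mul_I_sub_exp_mul_I (a b : ℝ) :
    ‖Complex.exp (a * Complex.I) - Complex.exp (b * Complex.I)‖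
      = 2 * |Real.sin ((a - b) / 2)| := by
  have hfac : Complex.exp ((a:ℂ) * Complex.I) - Complex.exp ((b:ℂ) * Complex.I)
      = Complex.exp ((b:ℂ) * Complex.I) * (Complex.exp (((a - b : ℝ) : ℂ) * Complex.I) - 1) := by
    rw [mul_sub, ← Complex.exp_add, mul_one]
    push_cast
    ring_nf
  rw [hfac, norm_mul, Complex.norm_exp_ofReal_mul_I, one_mul]
  set θ : ℝ := a - b with hθ
  have hexp : Complex.exp ((θ:ℂ) * Complex.I) - 1
      = ((Real.cos θ - 1 : ℝ) : ℂ) + ((Real.sin θ : ℝ) : ℂ) * Complex.I := by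
    rw [Complex.exp_mul_I, ← Complex.ofReal_cos, ← Complex.ofReal_sin]
    push_cast
    ring
  rw [hexp, Complex.norm_add_mul_I]
  have hsq : (Real.cos θ - 1) ^ 2 + Real.sin θ ^ 2 = (2 * |Real.sin (θ / 2)|) ^ 2 := by
    have h1 := Real.sin_sq_add_cos_sq θ
    have h2 : Real.sin (θ / 2) ^ 2 = 1 / 2 - Real.cos (2 * (θ / 2)) / 2 :=
      Real.sin_sq_eq_half_sub (θ / 2)
    rw [mul_pow, sq_abs]
    rw [show 2 * (θ / 2) = θ by ring] at h2
    nlinarith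
  rw [hsq, Real.sqrt_sq (by positivity)]

lemma sin_pi_div_p_pos : 0 < Real.sin (Real.pi / p) := by
  have hp1 := one_lt_p (p := p)
  apply Real.sin_pos_of_pos_of_lt_pi
  · positivity
  · rw [div_lt_iff₀ (by linarith)]
    nlinarith [Real.pi_pos]

lemma sin_lower (t : ℝ) (h1 : Real.pi / p ≤ t) (h2 : t ≤ Real.pi - Real.pi / p) :
    Real.sin (Real.pi / p) ≤ Real.sin t := by
  have hp1 := one_lt_p (p := p)
  have hp2 : (2:ℝ) ≤ p := by exact_mod_cast (Fact.out : p.Prime).two_le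
  have hpip : Real.pi / p ≤ Real.pi / 2 := by
    apply div_le_div_of_nonneg_left Real.pi_pos.le (by norm_num) hp2
  have hneg : -(Real.pi / 2) ≤ Real.pi / p := by
    have h0 : (0:ℝ) ≤ Real.pi / p := by positivity
    nlinarith [Real.pi_pos]
  by_cases ht : t ≤ Real.pi / 2
  · exact Real.sin_le_sin_of_le_of_le_pi_div_two hneg ht h1
  · push_neg at ht
    rw [← Real.sin_pi_sub t]
    apply Real.sin_le_sin_of_le_of_le_pi_div_two hneg (by linarith) (by linarith)

lemma sin_int_bound (j : ℤ) (hj0 : j ≠ 0) (hjp : |j| < (p:ℤ)) :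
    Real.sin (Real.pi / p) ≤ |Real.sin (Real.pi * j / p)| := by
  have hp1 := one_lt_p (p := p)
  have hodd : |Real.sin (Real.pi * j / p)| = |Real.sin (Real.pi * |j| / p)| := by
    rcases le_or_gt 0 j with h | h
    · rw [abs_of_nonneg h]
    · rw [abs_of_neg h]
      push_cast
      rw [show Real.pi * (-(j:ℝ)) / p = -(Real.pi * j / p) by ring, Real.sin_neg, abs_neg]
  rw [hodd, Int.cast_abs]
  have h1 : (1:ℝ) ≤ |(j:ℝ)| := by
    rw [← Int.cast_abs]
    have h1' : (1:ℤ) ≤ |j| := by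
      rcases abs_pos.mpr hj0 with h
      omega
    exact_mod_cast h1'
  have hjr : |(j:ℝ)| ≤ (p:ℝ) - 1 := by
    rw [← Int.cast_abs]
    have h2' : |j| ≤ (p:ℤ) - 1 := by
      have := Int.lt_iff_add_one_le.mp hjp
      linarith
    have h2'' : ((|j| : ℤ) : ℝ) ≤ (((p:ℤ) - 1 : ℤ) : ℝ) := by exact_mod_cast h2'
    push_cast at h2'' ⊢
    linarith
  have hppos : (0:ℝ) < p := by linarith
  have hb1 : Real.pi / p ≤ Real.pi * |(j:ℝ)| / p := by
    apply div_le_div_of_nonneg_right ?_ hppos.le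
    nlinarith [Real.pi_pos]
  have hb2 : Real.pi * |(j:ℝ)| / p ≤ Real.pi - Real.pi / p := by
    rw [show Real.pi - Real.pi / p = Real.pi * ((p:ℝ) - 1) / p by field_simp]
    apply div_le_div_of_nonneg_right ?_ hppos.le
    nlinarith [Real.pi_pos]
  exact le_trans (sin_lower _ hb1 hb2) (le_abs_self _)


lemma summable_inner (D : PadicDigits p) (m : ℕ∞) (x : ℚ_[p]) (n : ℤ) :
    Summable (fun k : ℕ => if (k : ℕ∞) ≤ m then (D.digit x (n - k) : ℝ) / (p : ℝ) ^ k else 0) := by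
  have hp1 := one_lt_p (p := p)
  have hg : Summable (fun k : ℕ => (p:ℝ) * ((p:ℝ)⁻¹)^k) :=
    Summable.mul_left _ (summable_geometric_of_lt_one (by positivity)
      (by rw [inv_lt_one_iff₀]; right; exact hp1))
  refine Summable.of_nonneg_of_le (fun k => ?_) (fun k => ?_) hg
  · split
    · positivity
    · exact le_refl 0
  · split
    · have hd : ((D.digit x (n - k) : ℝ)) ≤ p := by
        exact_mod_cast le_of_lt (D.digit_lt x (n - k))
      rw [inv_pow, div_eq_mul_inv]
      exact mul_le_mul hd le_rfl (by positivity) (by positivity)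
    · positivity

lemma chiFn_congr {D : PadicDigits p} {m : ℕ∞} {x y : ℚ_[p]} {n : ℤ}
    (h : ∀ k : ℕ, D.digit x (n - k) = D.digit y (n - k)) : chiFn D m x n = chiFn D m y n := by
  have ht : (∑' k : ℕ, if (k : ℕ∞) ≤ m then (D.digit x (n - k) : ℝ) / (p : ℝ) ^ k else 0)
      = ∑' k : ℕ, if (k : ℕ∞) ≤ m then (D.digit y (n - k) : ℝ) / (p : ℝ) ^ k else 0 :=
    tsum_congr fun k => by rw [h k]
  rw [chiFn, chiFn, ht]

lemma chiFn_eq_one {D : PadicDigits p} {m : ℕ∞} {x : ℚ_[p]} {n : ℤ}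
    (h : ∀ k : ℕ, D.digit x (n - k) = 0) : chiFn D m x n = 1 := by
  have ht : (∑' k : ℕ, if (k : ℕ∞) ≤ m then (D.digit x (n - k) : ℝ) / (p : ℝ) ^ k else 0)
      = 0 := by
    rw [tsum_congr (fun k => by rw [h k]; simp : ∀ k : ℕ,
      (if (k : ℕ∞) ≤ m then (D.digit x (n - k) : ℝ) / (p : ℝ) ^ k else 0) = 0), tsum_zero]
  rw [chiFn, ht]
  simp

lemma chiFn_abs (D : PadicDigits p) (m : ℕ∞) (x : ℚ_[p]) (n : ℤ) :
    ‖chiFn D m x n‖ = 1 :=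
  Complex.norm_exp_ofReal_mul_I _

lemma inner_diff (D : PadicDigits p) (m : ℕ∞) (x y : ℚ_[p])
    (hd : ∀ n : ℤ, n < 0 → D.digit x n = D.digit y n) :
    (∑' k : ℕ, if (k : ℕ∞) ≤ m then (D.digit x (0 - k) : ℝ) / (p : ℝ) ^ k else 0)
      - (∑' k : ℕ, if (k : ℕ∞) ≤ m then (D.digit y (0 - k) : ℝ) / (p : ℝ) ^ k else 0)
      = (D.digit x 0 : ℝ) - (D.digit y 0 : ℝ) := by
  rw [Summable.tsum_eq_zero_add (summable_inner D m x 0), Summable.tsum_eq_zero_add (summable_inner D m y 0)]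
  have htail : ∀ k : ℕ,
      (if ((k + 1 : ℕ) : ℕ∞) ≤ m then (D.digit x (0 - ((k:ℕ) + 1 : ℕ)) : ℝ) / (p : ℝ) ^ (k + 1 : ℕ) else 0)
      = (if ((k + 1 : ℕ) : ℕ∞) ≤ m then (D.digit y (0 - ((k:ℕ) + 1 : ℕ)) : ℝ) / (p : ℝ) ^ (k + 1 : ℕ) else 0) := by
    intro k
    rw [hd (0 - ((k:ℕ) + 1 : ℕ)) (by push_cast; omega)]
  rw [tsum_congr htail]
  simp

lemma chi_zero_abs (D : PadicDigits p) (m : ℕ∞) (x y : ℚ_[p])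
    (hd : ∀ n : ℤ, n < 0 → D.digit x n = D.digit y n)
    (hj : ¬ ((p:ℤ) ∣ ((D.digit x 0 : ℤ) - (D.digit y 0 : ℤ)))) :
    2 * Real.sin (Real.pi / p) ≤ ‖chiFn D m x 0 - chiFn D m y 0‖ := by
  rw [chiFn, chiFn, abs_exp_mul_I_sub_exp_mul_I]
  set j : ℤ := (D.digit x 0 : ℤ) - (D.digit y 0 : ℤ) with hjdef
  have hj0 : j ≠ 0 := fun h => hj (h ▸ dvd_zero _)
  have hjp : |j| < (p:ℤ) := by
    have h1 := D.digit_lt x 0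
    have h2 := D.digit_lt y 0
    rw [hjdef, abs_lt]
    constructor <;> [omega; omega]
  have harg : (2 * Real.pi / p * (∑' k : ℕ, if (k : ℕ∞) ≤ m then (D.digit x (0 - k) : ℝ) / (p : ℝ) ^ k else 0)
      - 2 * Real.pi / p * (∑' k : ℕ, if (k : ℕ∞) ≤ m then (D.digit y (0 - k) : ℝ) / (p : ℝ) ^ k else 0)) / 2
      = Real.pi * (j : ℝ) / p := by
    rw [← mul_sub, inner_diff D m x y hd, hjdef]
    push_cast
    ring
  rw [harg]
  have := sin_int_bound j hj0 hjp
  linarith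

lemma summable_upsilon (D : PadicDigits p) (m : ℕ∞) {s : ℂ} (hs : ‖s‖ < 1) (x : ℚ_[p]) :
    Summable (fun n : ℤ => s ^ n * (chiFn D m x n - if n < 0 then 1 else 0)) := by
  obtain ⟨N, hN0, hN⟩ := supportBound D x
  set u : ℤ → ℂ := fun n => s ^ n * (chiFn D m x n - if n < 0 then 1 else 0) with hu
  have hsupp : ∀ n : ℤ, n < N → u n = 0 := by
    intro n hn
    have h1 : chiFn D m x n = 1 := chiFn_eq_one (fun k => hN _ (by omega))
    have h2 : (if n < 0 then (1:ℂ) else 0) = 1 := if_pos (lt_of_lt_of_le hn hN0)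
    simp [hu, h1, h2]
  have hinj : Function.Injective (fun k : ℕ => N + (k : ℤ)) := fun a b h => by simpa using h
  have hrange : ∀ n ∉ Set.range (fun k : ℕ => N + (k : ℤ)), u n = 0 := by
    intro n hn
    apply hsupp
    by_contra h
    push_neg at h
    exact hn ⟨(n - N).toNat, by simp [Int.toNat_of_nonneg (by omega : (0:ℤ) ≤ n - N)]⟩
  rw [← hinj.summable_iff hrange]
  by_cases hs0 : s = 0
  · apply summable_of_finite_support
    apply Set.Finite.subset (Set.finite_singleton ((0 - N).toNat))
    intro k hk
    simp only [Function.mem_support, Function.comp_apply] at hk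
    simp only [Set.mem_singleton_iff]
    by_contra hne
    apply hk
    have hNk : N + (k:ℤ) ≠ 0 := by
      intro h
      exact hne (by omega)
    rw [hu]
    simp only [hs0, zero_zpow _ hNk, zero_mul]
  · apply Summable.of_norm
    have hg : Summable (fun k : ℕ => (‖s‖ ^ N * 2) * (‖s‖) ^ k) :=
      Summable.mul_left _ (summable_geometric_of_lt_one (norm_nonneg s) hs)
    refine Summable.of_nonneg_of_le (fun k => norm_nonneg _) (fun k => ?_) hg
    have habs : ‖chiFn D m x (N + k) - if (N + (k:ℤ)) < 0 then 1 else 0‖ ≤ 2 := by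
      refine le_trans (norm_sub_le _ _) ?_
      rw [chiFn_abs]
      have : ‖if (N + (k:ℤ)) < 0 then (1:ℂ) else 0‖ ≤ 1 := by
        split <;> simp
      linarith
    have hzp : ‖s ^ (N + (k:ℤ))‖ = ‖s‖ ^ N * ‖s‖ ^ k := by
      rw [norm_zpow, zpow_add₀ (norm_ne_zero_iff.mpr hs0), zpow_natCast]
    calc ‖u (N + (k:ℤ))‖ = ‖s ^ (N + (k:ℤ))‖ *
          ‖chiFn D m x (N + k) - if (N + (k:ℤ)) < 0 then 1 else 0‖ := by
          rw [hu]; simp [map_mul]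
    _ ≤ (‖s‖ ^ N * ‖s‖ ^ k) * 2 := by
          rw [hzp]
          exact mul_le_mul_of_nonneg_left habs (by positivity)
    _ = (‖s‖ ^ N * 2) * ‖s‖ ^ k := by ring

lemma upsilon_diff_bound (D : PadicDigits p) (m : ℕ∞) {s : ℂ} (hs : ‖s‖ < 1)
    (x y : ℚ_[p]) (hxy : ‖x - y‖ = 1) :
    2 * (Real.sin (Real.pi / p) - ‖s‖ / (1 - ‖s‖))
      ≤ ‖Upsilon D m s x - Upsilon D m s y‖ := by
  obtain ⟨hd, hj⟩ := digits_of_norm_sub_eq_one D x y hxy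
  have hux := summable_upsilon D m hs x
  have huy := summable_upsilon D m hs y
  set h : ℤ → ℂ := fun n => s ^ n * (chiFn D m x n - chiFn D m y n) with hh
  have hdiff : Upsilon D m s x - Upsilon D m s y = ∑' n : ℤ, h n := by
    rw [Upsilon, Upsilon, ← Summable.tsum_sub hux huy]
    exact tsum_congr fun n => by rw [hh]; ring
  have hchieq : ∀ n : ℤ, n < 0 → chiFn D m x n = chiFn D m y n := by
    intro n hn
    exact chiFn_congr fun k => hd (n - k) (by omega)
  have hsupp : ∀ n : ℤ, n ∉ Set.range ((↑) : ℕ → ℤ) → h n = 0 := by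
    intro n hn
    have hneg : n < 0 := by
      by_contra hpos
      push_neg at hpos
      exact hn ⟨n.toNat, by simp [Int.toNat_of_nonneg hpos]⟩
    rw [hh]
    simp [hchieq n hneg]
  have hinj : Function.Injective ((↑) : ℕ → ℤ) := Nat.cast_injective
  have hsupp' : Function.support h ⊆ Set.range ((↑) : ℕ → ℤ) := by
    intro n hn
    by_contra hr
    exact hn (hsupp n hr)
  have hzsum : ∑' n : ℤ, h n = ∑' k : ℕ, h k := (hinj.tsum_eq hsupp').symm
  have hbound : ∀ k : ℕ, ‖h (k : ℤ)‖ ≤ 2 * ‖s‖ ^ k := by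
    intro k
    have habs : ‖chiFn D m x k - chiFn D m y k‖ ≤ 2 := by
      refine le_trans (norm_sub_le _ _) ?_
      rw [chiFn_abs, chiFn_abs]
      norm_num
    calc ‖h (k : ℤ)‖ = ‖s ^ (k:ℤ)‖ * ‖chiFn D m x k - chiFn D m y k‖ := by
          rw [hh]; simp [map_mul]
    _ = ‖s‖ ^ k * ‖chiFn D m x k - chiFn D m y k‖ := by
          rw [norm_zpow, zpow_natCast]
    _ ≤ ‖s‖ ^ k * 2 := mul_le_mul_of_nonneg_left habs (by positivity)
    _ = 2 * ‖s‖ ^ k := by ring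
  have hgeom : Summable (fun k : ℕ => 2 * ‖s‖ ^ k) :=
    Summable.mul_left _ (summable_geometric_of_lt_one (norm_nonneg s) hs)
  have hnsum : Summable (fun k : ℕ => h k) :=
    Summable.of_norm (Summable.of_nonneg_of_le (fun k => norm_nonneg _) hbound hgeom)
  have hsplit := Summable.tsum_eq_zero_add hnsum
  have h0 : h ((0:ℕ) : ℤ) = chiFn D m x 0 - chiFn D m y 0 := by
    rw [hh]; simp
  have htail : ‖∑' k : ℕ, h ((k:ℕ) + 1 : ℕ)‖ ≤ 2 * (‖s‖ / (1 - ‖s‖)) := by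
    have hb2 : ∀ k : ℕ, ‖h (((k + 1 : ℕ)) : ℤ)‖ ≤ (2 * ‖s‖) * ‖s‖ ^ k := by
      intro k
      refine le_trans (hbound (k+1)) ?_
      rw [pow_succ]
      ring_nf
      exact le_refl _
    have hgeom2 : Summable (fun k : ℕ => (2 * ‖s‖) * ‖s‖ ^ k) :=
      Summable.mul_left _ (summable_geometric_of_lt_one (norm_nonneg s) hs)
    have hnorms : Summable (fun k : ℕ => ‖h (((k + 1 : ℕ)) : ℤ)‖) :=
      Summable.of_nonneg_of_le (fun k => norm_nonneg _) hb2 hgeom2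
    calc ‖∑' k : ℕ, h ((k:ℕ) + 1 : ℕ)‖ = ‖∑' k : ℕ, h (((k + 1 : ℕ)) : ℤ)‖ := by
          rfl
    _ ≤ ∑' k : ℕ, ‖h (((k + 1 : ℕ)) : ℤ)‖ := norm_tsum_le_tsum_norm hnorms
    _ ≤ ∑' k : ℕ, (2 * ‖s‖) * ‖s‖ ^ k := Summable.tsum_le_tsum hb2 hnorms hgeom2
    _ = (2 * ‖s‖) * (1 - ‖s‖)⁻¹ := by
          rw [tsum_mul_left, tsum_geometric_of_lt_one (norm_nonneg s) hs]
    _ = 2 * (‖s‖ / (1 - ‖s‖)) := by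
          rw [div_eq_mul_inv]; ring
  have hchi := chi_zero_abs D m x y hd hj
  have hineq : ‖chiFn D m x 0 - chiFn D m y 0‖
      - ‖∑' k : ℕ, h ((k:ℕ) + 1 : ℕ)‖
      ≤ ‖h ((0:ℕ):ℤ) + ∑' k : ℕ, h ((k:ℕ) + 1 : ℕ)‖ := by
    rw [h0]
    set T := ∑' k : ℕ, h ((k:ℕ) + 1 : ℕ)
    set a := chiFn D m x 0 - chiFn D m y 0
    have := norm_add_le (a + T) (-T)
    simp only [add_neg_cancel_right, norm_neg] at this
    linarith
  rw [hdiff, hzsum, hsplit]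
  calc 2 * (Real.sin (Real.pi / p) - ‖s‖ / (1 - ‖s‖))
      = 2 * Real.sin (Real.pi / p) - 2 * (‖s‖ / (1 - ‖s‖)) := by ring
  _ ≤ ‖chiFn D m x 0 - chiFn D m y 0‖
      - ‖∑' k : ℕ, h ((k:ℕ) + 1 : ℕ)‖ := by linarith
  _ ≤ ‖h ((0:ℕ):ℤ) + ∑' k : ℕ, h ((k:ℕ) + 1 : ℕ)‖ := hineq

end AuxLemmas

/-- `Δ_s^{(m)} ≥ 2(sin(π/p) − |s|/(1−|s|))`; consequently `Δ_s^{(m)} > 0` whenever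
`|s| < s₀ = sin(π/p)/(1 + sin(π/p))`. -/
theorem delta_lower_bound {p : ℕ} [Fact p.Prime] (D : PadicDigits p) (m : ℕ∞)
    (s : ℂ) (hs : ‖s‖ < 1) :
    2 * (Real.sin (Real.pi / p) - ‖s‖ / (1 - ‖s‖)) ≤ Delta D m s ∧
      (‖s‖ < Real.sin (Real.pi / p) / (1 + Real.sin (Real.pi / p)) →
        0 < Delta D m s) := by
  have hmain : 2 * (Real.sin (Real.pi / p) - ‖s‖ / (1 - ‖s‖)) ≤ Delta D m s := by
    apply le_csInf
    · exact ⟨‖Upsilon D m s 1 - Upsilon D m s 0‖, 1, 0, by simp, rfl⟩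
    · rintro r ⟨x, y, hxy, rfl⟩
      exact upsilon_diff_bound D m hs x y hxy
  refine ⟨hmain, fun hs0 => ?_⟩
  have hsin := sin_pi_div_p_pos (p := p)
  set a := ‖s‖ with ha
  have ha0 : 0 ≤ a := norm_nonneg s
  set σ := Real.sin (Real.pi / p) with hσ
  have h1σ : (0:ℝ) < 1 + σ := by linarith
  have h2 : a * (1 + σ) < σ := by
    rw [← lt_div_iff₀ h1σ]
    exact hs0
  have h3 : a / (1 - a) < σ := by
    rw [div_lt_iff₀ (by linarith : (0:ℝ) < 1 - a)]
    nlinarith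
  have : 0 < 2 * (σ - a / (1 - a)) := by linarith
  linarith
end
end
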